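/- arXiv:2311.14997 — 7 statements merged into one kernel-verified Lean document; each statement's English description precedes it below -/
import Mathlib

section
/- For every q ≥ 2 and every n ≥ 2, there exists a family F : Fin (2q-2) → ((Fin n → Fin q) → Fin q) such that every F l is a latin n-cube of order q (so F is a (2q-2)-layer latin (n+1)-cuboid of order q), and F has no transversal: there do not exist an injective map ι : Fin q → Fin (2q-2) and a map t : Fin q → (Fin n → Fin q) such that for every j : Fin n the map i ↦ t i j is a bijection of Fin q and the map i ↦ F (ι i) (t i) is a bijection of Fin q. -/
/-- For every `q ≥ 2` and `n ≥ 2` there is a `(2q-2)`-layer latin `(n+1)`-cuboid of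
order `q` with no transversals. -/
theorem exists_layer_latin_cuboid_no_transversal
    (q n : ℕ) (hq : 2 ≤ q) (hn : 2 ≤ n) :
    ∃ F : Fin (2 * q - 2) → (Fin n → Fin q) → Fin q,
      (∀ (l : Fin (2 * q - 2)) (i : Fin n) (x : Fin n → Fin q),
        Function.Bijective fun a => F l (Function.update x i a)) ∧
      ¬ ∃ (ι : Fin q → Fin (2 * q - 2)) (t : Fin q → Fin n → Fin q),
          Function.Injective ι ∧
          (∀ j : Fin n, Function.Bijective fun i => t i j) ∧
          Function.Bijective fun i => F (ι i) (t i) := by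
  obtain ⟨m, rfl⟩ : ∃ m, q = m + 2 := ⟨q - 2, by omega⟩
  clear hq
  have he : ∀ a : Fin (m + 2), ((a.val : ℕ) : ZMod (m + 2)) = a := by
    have := ZMod.natCast_rightInverse (n := m + 2)
    exact fun a => this a
  -- the sum of all elements
  set S : ZMod (m + 2) := ∑ b : Fin (m + 2), ((b.val : ℕ) : ZMod (m + 2)) with hS
  set T : ZMod (m + 2) := S - n • S with hT
  set d : ZMod (m + 2) := if T = 0 then 1 else 0 with hd
  set c : Fin (2 * (m + 2) - 2) → ZMod (m + 2) :=
    fun l => if m + 1 ≤ l.val then d else 0 with hc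
  refine ⟨fun l x => (c l + ∑ j, ((x j).val : ZMod (m + 2)) : ZMod (m + 2)), ?_, ?_⟩
  · intro l i x
    have hfun : (fun a : Fin (m + 2) =>
        (c l + ∑ j, (((Function.update x i a) j).val : ZMod (m + 2)) : ZMod (m + 2)))
        = fun a : ZMod (m + 2) =>
          (c l + ∑ j ∈ Finset.univ \ {i}, ((x j).val : ZMod (m + 2))) + a := by
      funext a
      have h1 : (fun j => (((Function.update x i a) j).val : ZMod (m + 2)))
          = Function.update (fun j => ((x j).val : ZMod (m + 2))) i ((a.val : ZMod (m + 2))) := by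
        ext j
        exact congrFun (Function.comp_update (fun b : Fin (m+2) => ((b.val : ℕ) : ZMod (m+2))) x i a) j
      calc c l + ∑ j, (((Function.update x i a) j).val : ZMod (m + 2))
          = c l + ∑ j, Function.update (fun j => ((x j).val : ZMod (m + 2))) i
              ((a.val : ZMod (m + 2))) j := by rw [h1]
        _ = c l + (((a.val : ℕ) : ZMod (m+2)) + ∑ j ∈ Finset.univ \ {i}, ((x j).val : ZMod (m + 2))) := by
            rw [Finset.sum_update_of_mem (Finset.mem_univ i)]
        _ = (c l + ∑ j ∈ Finset.univ \ {i}, ((x j).val : ZMod (m + 2)))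
              + (show ZMod (m + 2) from a) := by
            rw [he a, add_assoc]; exact congrArg _ (add_comm _ _)
    rw [hfun]
    exact (Equiv.addLeft _).bijective
  · rintro ⟨ι, t, hι, ht, hb⟩
    -- sum the bijection
    have h1 : ∑ i : Fin (m + 2),
        (c (ι i) + ∑ j, ((t i j).val : ZMod (m + 2))) = S := by
      have := hb.sum_comp (fun b : Fin (m + 2) => ((b.val : ℕ) : ZMod (m + 2)))
      calc ∑ i : Fin (m + 2), (c (ι i) + ∑ j, ((t i j).val : ZMod (m + 2)))
          = ∑ i : Fin (m + 2),
              (((c (ι i) + ∑ j, ((t i j).val : ZMod (m + 2)) : ZMod (m+2)) :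
                Fin (m+2)).val : ZMod (m+2)) := by
            refine Finset.sum_congr rfl fun i _ => ?_
            exact (he _).symm
        _ = S := this
    have h2 : ∑ i : Fin (m + 2), ∑ j, ((t i j).val : ZMod (m + 2)) = n • S := by
      rw [Finset.sum_comm]
      have : ∀ j : Fin n, ∑ i : Fin (m + 2), ((t i j).val : ZMod (m + 2)) = S :=
        fun j => (ht j).sum_comp (fun b : Fin (m + 2) => ((b.val : ℕ) : ZMod (m + 2)))
      rw [Finset.sum_congr rfl fun j _ => this j, Finset.sum_const, Finset.card_univ,
        Fintype.card_fin]
    have hC : ∑ i : Fin (m + 2), c (ι i) = T := by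
      rw [Finset.sum_add_distrib, h2] at h1
      rw [hT]
      linear_combination h1
    -- counting
    by_cases hT0 : T = 0
    · have hd1 : d = 1 := if_pos hT0
      have hCk : ∑ i : Fin (m + 2), c (ι i)
          = ((Finset.univ.filter fun i : Fin (m+2) => m + 1 ≤ (ι i).val).card : ZMod (m+2)) := by
        rw [hc]
        simp only [hd1]
        exact Finset.sum_boole _ _
      set K := Finset.univ.filter fun i : Fin (m+2) => m + 1 ≤ (ι i).val with hK
      have a0 : m + 1 < 2 * (m + 2) - 2 := by omega
      have hub : K.card ≤ m + 1 := by
        have : K.card ≤ (Finset.Ici (⟨m+1, a0⟩ : Fin (2 * (m + 2) - 2))).card := by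
          refine Finset.card_le_card_of_injOn ι ?_ (hι.injOn)
          intro i hi
          simp only [hK, Finset.mem_coe, Finset.mem_filter] at hi
          simp only [Finset.mem_coe, Finset.mem_Ici, Fin.le_def]
          exact hi.2
        rw [Fin.card_Ici] at this
        have hv : (⟨m+1, a0⟩ : Fin (2 * (m + 2) - 2)).val = m + 1 := rfl
        omega
      have hlb : 1 ≤ K.card := by
        have hcomp : (Finset.univ.filter fun i : Fin (m+2) => ¬ (m + 1 ≤ (ι i).val)).card ≤ m + 1 := by
          have : (Finset.univ.filter fun i : Fin (m+2) => ¬ (m + 1 ≤ (ι i).val)).card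
              ≤ (Finset.Iio (⟨m+1, a0⟩ : Fin (2 * (m + 2) - 2))).card := by
            refine Finset.card_le_card_of_injOn ι ?_ (hι.injOn)
            intro i hi
            simp only [Finset.mem_coe, Finset.mem_filter] at hi
            simp only [Finset.mem_coe, Finset.mem_Iio, Fin.lt_def]
            omega
          rw [Fin.card_Iio] at this
          have hv : (⟨m+1, a0⟩ : Fin (2 * (m + 2) - 2)).val = m + 1 := rfl
          omega
        have htot : K.card
            + (Finset.univ.filter fun i : Fin (m+2) => ¬ (m + 1 ≤ (ι i).val)).card = m + 2 := by
          rw [hK]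
          have := Finset.card_filter_add_card_filter_not
            (s := (Finset.univ : Finset (Fin (m+2)))) (fun i => m + 1 ≤ (ι i).val)
          simpa using this
        omega
      have : (K.card : ZMod (m+2)) = 0 := by rw [← hCk, hC, hT0]
      rw [ZMod.natCast_eq_zero_iff] at this
      have := Nat.le_of_dvd (by omega) this
      omega
    · have hd0 : d = 0 := if_neg hT0
      have : ∑ i : Fin (m + 2), c (ι i) = 0 := by
        rw [hc]; simp [hd0]
      rw [hC] at this
      exact hT0 this
end

section
/- Let q ≥ 3 be odd, let n ≥ 2, and let π : Fin q → Equiv.Perm (ZMod q). If there is no bijection y : Fin q → ZMod q with ∑_{j : Fin q} π j (y j) = 0 in ZMod q, then the layer-latin (n+1)-cube of order q whose layer j is L[π j, n] has no transversal. -/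
/-!
For odd `q` the elements of `ZMod q` sum to `0`, so any bijection `Fin q → ZMod q` sums to `0`.
Summing the values of a transversal `u` over the layers therefore gives `0`; the coordinates
`m ≠ 0` contribute `∑ₗ u l m = 0` each, leaving `∑ₗ π l (u l 0) = 0`, a zero-sum diagonal.
-/

open Finset

theorem sum_univ_id_eq_zero_of_odd_card {G : Type*} [AddCommGroup G] [Fintype G]
    (hG : Odd (Fintype.card G)) : ∑ g : G, g = 0 := by
  set S := ∑ g : G, g
  have hneg : -S = S := by
    rw [← sum_neg_distrib]
    exact Equiv.sum_comp (Equiv.neg G) id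
  have htwo : 2 • S = 0 := by
    rw [two_nsmul, ← neg_add_cancel S, hneg]
  obtain ⟨k, hk⟩ := hG
  calc S = k • (2 • S) + S := by rw [htwo, nsmul_zero, zero_add]
    _ = Fintype.card G • S := by rw [hk, add_nsmul, one_nsmul, mul_nsmul]
    _ = 0 := card_nsmul_eq_zero

theorem sum_eq_zero_of_bijective_of_odd_card {ι G : Type*} [Fintype ι] [AddCommGroup G]
    [Fintype G] (hG : Odd (Fintype.card G)) {f : ι → G} (hf : f.Bijective) :
    ∑ i, f i = 0 :=
  (hf.sum_comp id).trans (sum_univ_id_eq_zero_of_odd_card hG)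

/-- If the row-latin square formed by the permutations `π j` has no diagonal with zero
sum, then the layer-latin `(n+1)`-cube of odd order `q` with layers `L[π j, n]` has no
transversal. -/
theorem layer_latin_cube_no_transversal_of_no_zero_sum_diagonal
    (q n : ℕ) (hodd : Odd q) (hn : 2 ≤ n)
    (π : Fin q → Equiv.Perm (ZMod q))
    (hdiag : ¬ ∃ y : Fin q → ZMod q, Function.Bijective y ∧
      (∑ j : Fin q, π j (y j)) = 0) :
    ¬ ∃ u : Fin q → Fin n → ZMod q,
        (∀ j : Fin n, Function.Bijective fun l => u l j) ∧
        Function.Bijective fun l =>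
          π l (u l ⟨0, by omega⟩) +
            ∑ m ∈ Finset.univ.filter (fun m : Fin n => m ≠ ⟨0, by omega⟩), u l m := by
  rintro ⟨u, hcol, hF⟩
  have : NeZero q := ⟨hodd.pos.ne'⟩
  have hcard : Odd (Fintype.card (ZMod q)) := by rwa [ZMod.card]
  refine hdiag ⟨fun l => u l ⟨0, by omega⟩, hcol _, ?_⟩
  have htotal := sum_eq_zero_of_bijective_of_odd_card hcard hF
  rwa [sum_add_distrib, sum_comm,
    sum_eq_zero fun m _ => sum_eq_zero_of_bijective_of_odd_card hcard (hcol m), add_zero]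
    at htotal
end

section
/- Let q ≥ 2 be even, let n ≥ 2, let π : Fin q → Equiv.Perm (ZMod q), and set s : ZMod q equal to 0 if n is even and equal to the image of the natural number q/2 in ZMod q if n is odd. If there is no bijection y : Fin q → ZMod q with ∑_{j : Fin q} π j (y j) = s in ZMod q, then the layer-latin (n+1)-cube of order q whose layer j is L[π j, n] has no transversal. -/
/-!
Summing the values of a transversal `u` over all layers gives `∑ x : ZMod q, x = q/2`, and so
does summing each of the `n - 1` coordinates `u · m`, `m ≠ 0`. Hence the diagonal
`l ↦ u l 0` of the permutations `π l` has sum `q/2 - (n - 1) • (q/2)`, which is `0` or `q/2`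
according to the parity of `n`, since `2 • (q/2) = 0`.
-/

open Finset Function

theorem ZMod.sum_univ_eq_sum_range (q : ℕ) [NeZero q] :
    ∑ x : ZMod q, x = ∑ i ∈ range q, (i : ZMod q) := by
  rw [← Fin.sum_univ_eq_sum_range]
  refine (Fintype.sum_bijective (fun i : Fin q => ((i : ℕ) : ZMod q)) ?_ _ _ fun _ => rfl).symm
  refine (Fintype.bijective_iff_injective_and_card _).2 ⟨fun a b hab => ?_, by simp⟩
  simpa [Nat.mod_eq_of_lt a.isLt, Nat.mod_eq_of_lt b.isLt, Fin.ext_iff] using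
    congrArg ZMod.val hab

theorem ZMod.sum_univ_of_even {q : ℕ} [NeZero q] (hq : Even q) :
    ∑ x : ZMod q, x = ((q / 2 : ℕ) : ZMod q) := by
  obtain ⟨k, rfl⟩ := hq
  have hgauss : ∑ i ∈ range (k + k), i + k = k * (k + k) := by
    refine Nat.eq_of_mul_eq_mul_right two_pos ?_
    rw [add_mul, sum_range_id_mul_two]
    rcases k with _ | j
    · rfl
    · rw [show j + 1 + (j + 1) - 1 = 2 * j + 1 by omega]
      ring
  have hcast := congrArg (Nat.cast : ℕ → ZMod (k + k)) hgauss
  have hkk : ((k + k : ℕ) : ZMod (k + k)) = 0 := ZMod.natCast_self _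
  push_cast at hcast hkk
  rw [hkk, mul_zero] at hcast
  rw [ZMod.sum_univ_eq_sum_range, show (k + k) / 2 = k by omega]
  linear_combination hcast - hkk

theorem sum_transversal_add_nsmul_sum_univ {ι G : Type*} [Fintype ι] [AddCommMonoid G]
    [Fintype G] {n : ℕ} (z : Fin n) (f : ι → G → G) (u : ι → Fin n → G)
    (hcols : ∀ j, Bijective fun l => u l j)
    (hF : Bijective fun l => f l (u l z) + ∑ m ∈ univ.filter (fun m => m ≠ z), u l m) :
    ∑ l, f l (u l z) + (n - 1) • ∑ x : G, x = ∑ x : G, x := by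
  have hcol : ∀ m, ∑ l, u l m = ∑ x : G, x := fun m => (hcols m).sum_comp id
  have hcard : #(univ.filter fun m => m ≠ z) = n - 1 := by
    rw [filter_ne', card_erase_of_mem (mem_univ z), card_univ, Fintype.card_fin]
  calc ∑ l, f l (u l z) + (n - 1) • ∑ x : G, x
      = ∑ l, f l (u l z) + ∑ m ∈ univ.filter (fun m => m ≠ z), ∑ l, u l m := by
        rw [sum_congr rfl fun m _ => hcol m, sum_const, hcard]
    _ = ∑ l, (f l (u l z) + ∑ m ∈ univ.filter (fun m => m ≠ z), u l m) := by
        rw [sum_add_distrib, sum_comm]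
    _ = ∑ x : G, x := hF.sum_comp id

/-- If the row-latin square formed by the permutations `π j` has no diagonal with sum
`s` (where `s = 0` for even `n` and `s = q/2` for odd `n`), then the layer-latin
`(n+1)`-cube of even order `q` with layers `L[π j, n]` has no transversal. -/
theorem layer_latin_cube_even_order_no_transversal
    (q n : ℕ) (hq : 2 ≤ q) (heven : Even q) (hn : 2 ≤ n)
    (π : Fin q → Equiv.Perm (ZMod q))
    (hdiag : ¬ ∃ y : Fin q → ZMod q, Function.Bijective y ∧
      (∑ j : Fin q, π j (y j)) =
        (if Even n then (0 : ZMod q) else ((q / 2 : ℕ) : ZMod q))) :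
    ¬ ∃ u : Fin q → Fin n → ZMod q,
        (∀ j : Fin n, Function.Bijective fun l => u l j) ∧
        Function.Bijective fun l =>
          π l (u l ⟨0, by omega⟩) +
            ∑ m ∈ Finset.univ.filter (fun m : Fin n => m ≠ ⟨0, by omega⟩), u l m := by
  have : NeZero q := ⟨by omega⟩
  rintro ⟨u, hcols, hF⟩
  refine hdiag ⟨fun l => u l ⟨0, by omega⟩, hcols _, ?_⟩
  have hsum := sum_transversal_add_nsmul_sum_univ _ (fun l => π l) u hcols hF
  rw [ZMod.sum_univ_of_even heven] at hsum
  have htwo : 2 • ((q / 2 : ℕ) : ZMod q) = 0 := by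
    rw [nsmul_eq_mul, ← Nat.cast_mul, Nat.mul_div_cancel' heven.two_dvd, ZMod.natCast_self]
  rw [nsmul_eq_mod_nsmul _ htwo] at hsum
  split_ifs with hn_even
  · rw [show (n - 1) % 2 = 1 by grind, one_nsmul] at hsum
    simpa using hsum
  · rw [show (n - 1) % 2 = 0 by grind, zero_nsmul, add_zero] at hsum
    exact hsum
end

section
/- Let q ≥ 2, n ≥ 2, and i : Fin q → ZMod q, and let F be the layer-latin (n+1)-cube of order q whose layer j is L[ε_{i j}, n]. Then every cell of F is contained in the same number of transversals: for all layers l, l' : Fin q and all positions x, x' : Fin n → ZMod q, the number of transversals u of F with u l = x equals the number of transversals u of F with u l' = x'. -/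
/-! Adding a constant vector `d` to every layer of a transversal gives again a transversal:
each coordinate map `t ↦ u t j` is composed with a translation, and the sum map is shifted by
`∑ m, d m`. Translating by `d` moves the cells of layer `l` at `x` to those at `x + d`, so the
transversals split as `(Fin n → ZMod q) × {u | u l = x}`, and the fibre count is the total count
divided by `q ^ n` whatever `l` and `x` are. -/

open Function

section FibreCount

variable {ι G : Type*} [AddGroup G]

def equivProdFiberOfAddConst (P : (ι → G) → Prop) (hP : ∀ u, P u → ∀ d, P fun t => u t + d)
    (l : ι) (x : G) : {u // P u} ≃ G × {u // P u ∧ u l = x} where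
  toFun u := (-x + u.1 l, ⟨fun t => u.1 t + -(-x + u.1 l), hP _ u.2 _, by simp⟩)
  invFun p := ⟨fun t => p.2.1 t + p.1, hP _ p.2.2.1 _⟩
  left_inv u := by ext t; simp [add_assoc]
  right_inv p := by
    obtain ⟨g, v, hv, rfl⟩ := p
    ext <;> simp [add_assoc]

theorem card_fiber_eq_of_add_const [Finite G] (P : (ι → G) → Prop)
    (hP : ∀ u, P u → ∀ d, P fun t => u t + d) (l l' : ι) (x x' : G) :
    Nat.card {u // P u ∧ u l = x} = Nat.card {u // P u ∧ u l' = x'} := by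
  have hG : Nat.card G ≠ 0 := Nat.card_ne_zero.mpr ⟨inferInstance, inferInstance⟩
  apply Nat.eq_of_mul_eq_mul_left (Nat.pos_of_ne_zero hG)
  rw [← Nat.card_prod, ← Nat.card_prod, ← Nat.card_congr (equivProdFiberOfAddConst P hP l x),
    Nat.card_congr (equivProdFiberOfAddConst P hP l' x')]

end FibreCount

section SumTransversal

variable {ι κ A : Type*} [AddCommGroup A] [Fintype κ]

def IsSumTransversal (i : ι → A) (u : ι → κ → A) : Prop :=
  (∀ j, Bijective fun t => u t j) ∧ Bijective fun t => i t + ∑ m, u t m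

theorem IsSumTransversal.add_const {i : ι → A} {u : ι → κ → A} (hu : IsSumTransversal i u)
    (d : κ → A) : IsSumTransversal i fun t => u t + d := by
  refine ⟨fun j => (Equiv.addRight (d j)).bijective.comp (hu.1 j), ?_⟩
  have hsum : (fun t => i t + ∑ m, (u t + d) m) = fun t => (i t + ∑ m, u t m) + ∑ m, d m := by
    funext t
    simp only [Pi.add_apply, Finset.sum_add_distrib, add_assoc]
  rw [hsum]
  exact (Equiv.addRight _).bijective.comp hu.2

end SumTransversal

theorem shift_layer_latin_cube_cell_transversal_count_eq_general
    (q n : ℕ) (i : Fin q → ZMod q)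
    (l l' : Fin q) (x x' : Fin n → ZMod q) :
    Nat.card {u : Fin q → Fin n → ZMod q //
        (∀ j : Fin n, Function.Bijective fun t => u t j) ∧
        (Function.Bijective fun t => i t + ∑ m : Fin n, u t m) ∧
        u l = x} =
    Nat.card {u : Fin q → Fin n → ZMod q //
        (∀ j : Fin n, Function.Bijective fun t => u t j) ∧
        (Function.Bijective fun t => i t + ∑ m : Fin n, u t m) ∧
        u l' = x'} := by
  have : NeZero q := NeZero.of_pos l.pos
  simp only [← and_assoc]
  exact card_fiber_eq_of_add_const (IsSumTransversal i) (fun _ hu => hu.add_const) l l' x x'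

/-- In a layer-latin `(n+1)`-cube whose layers are the shifts `L[ε_{i j}, n]`,
every cell is contained in the same number of transversals. -/
theorem shift_layer_latin_cube_cell_transversal_count_eq
    (q n : ℕ) (hq : 2 ≤ q) (hn : 2 ≤ n) (i : Fin q → ZMod q)
    (l l' : Fin q) (x x' : Fin n → ZMod q) :
    Nat.card {u : Fin q → Fin n → ZMod q //
        (∀ j : Fin n, Function.Bijective fun t => u t j) ∧
        (Function.Bijective fun t => i t + ∑ m : Fin n, u t m) ∧
        u l = x} =
    Nat.card {u : Fin q → Fin n → ZMod q //
        (∀ j : Fin n, Function.Bijective fun t => u t j) ∧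
        (Function.Bijective fun t => i t + ∑ m : Fin n, u t m) ∧
        u l' = x'} :=
  shift_layer_latin_cube_cell_transversal_count_eq_general q n i l l' x x'
end

section
/- Let X : Fin 5 → Fin 5 → Fin 5 → Fin 5 be a layer-latin cube of order 5 (each X l is a latin square of order 5). Let A, R, C be 2-element subsets of Fin 5, with complements Aᶜ, Rᶜ, Cᶜ (which are 3-element subsets). If the number of distinct ranges of transversals of the subarray of X with layers in A, rows in R and columns in C, plus the number of distinct ranges of transversals of the subarray of X with layers in Aᶜ, rows in Rᶜ and columns in Cᶜ, is at least 11, then X has a transversal. -/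
/-!
If the `2×2×2` subarray on `A × R × C` has a transversal with range `S` and the complementary
`3×3×3` subarray has one with range `Sᶜ`, the two glue to a transversal of the whole cube.
Such an `S` exists by pigeonhole: the ranges of the first kind and the complements of the ranges
of the second kind are all `2`-subsets of `Fin 5`, of which there are only `10`.
-/

/-- The set of ranges of transversals of the subarray of a layer-latin cube `X` of
order 5 with layers in `A`, rows in `R` and columns in `C` (all of cardinality `m`). -/
def transversalRanges (X : Fin 5 → Fin 5 → Fin 5 → Fin 5) (m : ℕ)
    (A R C : Finset (Fin 5)) : Set (Finset (Fin 5)) :=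
  { S | ∃ l r c : Fin m → Fin 5,
      Function.Injective l ∧ Function.Injective r ∧ Function.Injective c ∧
      Finset.image l Finset.univ = A ∧
      Finset.image r Finset.univ = R ∧
      Finset.image c Finset.univ = C ∧
      Function.Injective (fun t => X (l t) (r t) (c t)) ∧
      S = Finset.image (fun t => X (l t) (r t) (c t)) Finset.univ }

open Function Finset

section Pigeonhole

variable {α : Type*} [Fintype α] {r : ℕ}

theorem Set.Sized.ncard_le {s : Set (Finset α)} (hs : s.Sized r) :
    s.ncard ≤ (Fintype.card α).choose r := by
  classical
  rw [Set.ncard_eq_toFinset_card']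
  exact Set.Sized.card_le (by simpa using hs)

theorem Set.Sized.image_compl [DecidableEq α] {t : Set (Finset α)}
    (ht : t.Sized (Fintype.card α - r)) (hr : r ≤ Fintype.card α) :
    (compl '' t).Sized r := by
  rintro _ ⟨T, hT, rfl⟩
  rw [card_compl, ht hT]
  omega

theorem exists_mem_compl_mem_of_choose_lt [DecidableEq α] {s t : Set (Finset α)}
    (hs : s.Sized r) (ht : t.Sized (Fintype.card α - r)) (hr : r ≤ Fintype.card α)
    (h : (Fintype.card α).choose r < s.ncard + t.ncard) :
    ∃ S ∈ s, Sᶜ ∈ t := by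
  by_contra! hdisj
  have hdisj' : Disjoint s (compl '' t) := by
    rw [Set.disjoint_left]
    rintro S hS ⟨T, hT, rfl⟩
    exact hdisj _ hS (by rwa [compl_compl])
  have hunion := Set.ncard_union_eq hdisj'
  rw [Set.ncard_image_of_injective t compl_injective] at hunion
  have := (Set.sized_union.2 ⟨hs, ht.image_compl hr⟩).ncard_le
  omega

end Pigeonhole

theorem bijective_sumElim_of_image_eq_compl {ι κ α : Type*} [Fintype ι] [Fintype κ]
    [Fintype α] [DecidableEq α] {f : ι → α} {g : κ → α} (hf : Injective f) (hg : Injective g)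
    {P : Finset α} (hfP : image f univ = P) (hgP : image g univ = Pᶜ) :
    Bijective (Sum.elim f g) := by
  have mem_f : ∀ i, f i ∈ P := fun i => hfP ▸ mem_image_of_mem f (mem_univ i)
  have mem_g : ∀ k, g k ∈ Pᶜ := fun k => hgP ▸ mem_image_of_mem g (mem_univ k)
  refine ⟨hf.sumElim hg fun i k hik => mem_compl.1 (mem_g k) (hik ▸ mem_f i), fun a => ?_⟩
  by_cases ha : a ∈ P
  · obtain ⟨i, -, rfl⟩ := mem_image.1 (hfP ▸ ha)
    exact ⟨.inl i, rfl⟩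
  · obtain ⟨k, -, rfl⟩ := mem_image.1 (hgP ▸ mem_compl.2 ha)
    exact ⟨.inr k, rfl⟩

theorem exists_transversal_of_bijective {ι α β γ δ : Type*} (X : α → β → γ → δ)
    {l : ι → α} {r : ι → β} {c : ι → γ} (hl : Bijective l) (hr : Bijective r)
    (hc : Bijective c) (hv : Bijective fun i => X (l i) (r i) (c i)) :
    ∃ u : α → β × γ, (Bijective fun a => (u a).1) ∧ (Bijective fun a => (u a).2) ∧
      Bijective fun a => X a (u a).1 (u a).2 := by
  let e := Equiv.ofBijective l hl
  refine ⟨fun a => (r (e.symm a), c (e.symm a)), hr.comp e.symm.bijective,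
    hc.comp e.symm.bijective, ?_⟩
  have hX : (fun a => X a (r (e.symm a)) (c (e.symm a))) =
      (fun i => X (l i) (r i) (c i)) ∘ e.symm := by
    funext a
    simp only [comp_apply]
    rw [← Equiv.ofBijective_apply l hl (e.symm a), Equiv.apply_symm_apply]
  simpa only [hX] using hv.comp e.symm.bijective

theorem card_of_mem_transversalRanges {X : Fin 5 → Fin 5 → Fin 5 → Fin 5} {m : ℕ}
    {A R C S : Finset (Fin 5)} (hS : S ∈ transversalRanges X m A R C) : S.card = m := by
  obtain ⟨l, r, c, -, -, -, -, -, -, hv, rfl⟩ := hS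
  simp [card_image_of_injective _ hv]

theorem exists_transversal_of_mem_transversalRanges_compl
    {X : Fin 5 → Fin 5 → Fin 5 → Fin 5} {m n : ℕ} {A R C S : Finset (Fin 5)}
    (hS : S ∈ transversalRanges X m A R C) (hSc : Sᶜ ∈ transversalRanges X n Aᶜ Rᶜ Cᶜ) :
    ∃ u : Fin 5 → Fin 5 × Fin 5,
      (Bijective fun l => (u l).1) ∧ (Bijective fun l => (u l).2) ∧
      Bijective fun l => X l (u l).1 (u l).2 := by
  obtain ⟨l, r, c, hl, hr, hc, hlA, hrR, hcC, hv, hvS⟩ := hS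
  obtain ⟨l', r', c', hl', hr', hc', hlA', hrR', hcC', hv', hvS'⟩ := hSc
  refine exists_transversal_of_bijective X (bijective_sumElim_of_image_eq_compl hl hl' hlA hlA')
    (bijective_sumElim_of_image_eq_compl hr hr' hrR hrR')
    (bijective_sumElim_of_image_eq_compl hc hc' hcC hcC') ?_
  convert bijective_sumElim_of_image_eq_compl hv hv' hvS.symm hvS'.symm using 1
  funext i
  cases i <;> rfl

theorem layer_latin_cube_transversal_of_ranges_sum_ge_eleven_general
    (X : Fin 5 → Fin 5 → Fin 5 → Fin 5)
    (A R C : Finset (Fin 5))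
    (h : 11 ≤ (transversalRanges X 2 A R C).ncard +
      (transversalRanges X 3 Aᶜ Rᶜ Cᶜ).ncard) :
    ∃ u : Fin 5 → Fin 5 × Fin 5,
      (Function.Bijective fun l => (u l).1) ∧
      (Function.Bijective fun l => (u l).2) ∧
      Function.Bijective fun l => X l (u l).1 (u l).2 := by
  have hchoose : (Fintype.card (Fin 5)).choose 2 = 10 := by simp [Nat.choose]
  obtain ⟨S, hS, hSc⟩ := exists_mem_compl_mem_of_choose_lt
    (s := transversalRanges X 2 A R C) (t := transversalRanges X 3 Aᶜ Rᶜ Cᶜ)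
    (fun _ hS => card_of_mem_transversalRanges hS)
    (fun _ hT => card_of_mem_transversalRanges hT) (by simp) (by omega)
  exact exists_transversal_of_mem_transversalRanges_compl hS hSc

/-- If the number of ranges of transversals of a `2×2×2` subcube plus the number of
ranges of transversals of the complementary `3×3×3` subcube is at least 11, then the
layer-latin cube of order 5 has a transversal. -/
theorem layer_latin_cube_transversal_of_ranges_sum_ge_eleven
    (X : Fin 5 → Fin 5 → Fin 5 → Fin 5)
    (hX1 : ∀ (l : Fin 5) (c : Fin 5), Function.Bijective fun r => X l r c)
    (hX2 : ∀ (l : Fin 5) (r : Fin 5), Function.Bijective fun c => X l r c)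
    (A R C : Finset (Fin 5)) (hA : A.card = 2) (hR : R.card = 2) (hC : C.card = 2)
    (h : 11 ≤ (transversalRanges X 2 A R C).ncard +
      (transversalRanges X 3 Aᶜ Rᶜ Cᶜ).ncard) :
    ∃ u : Fin 5 → Fin 5 × Fin 5,
      (Function.Bijective fun l => (u l).1) ∧
      (Function.Bijective fun l => (u l).2) ∧
      Function.Bijective fun l => X l (u l).1 (u l).2 :=
  layer_latin_cube_transversal_of_ranges_sum_ge_eleven_general X A R C h
end

section
/- Let P : Fin 2 → Fin 5 → Fin 2 → Fin 5 be a layer-latin parallelepiped of size 2×5×2 chosen from a 2-layer latin cuboid of order 5, i.e.: for every layer l and column c the map r ↦ P l r c is a bijection of Fin 5; for every layer l and row r, P l r 0 ≠ P l r 1; and for every row r and column c, P 0 r c ≠ P 1 r c. Suppose the 2-cube of P on a pair of distinct rows {r₁, r₂} has no transversal. Then for every pair of distinct rows {r₃, r₄} with {r₃, r₄} ≠ {r₁, r₂} and {r₃, r₄} ∩ {r₁, r₂} ≠ ∅ (an adjacent 2-cube), the set of ranges of transversals of the 2-cube on {r₃, r₄} has at least 2 elements. -/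
/-- The set of ranges of transversals of the 2-cube of a `2×5×2` layer-latin
parallelepiped `P` on the pair of rows `{r₁, r₂}`. -/
def ranges2 (P : Fin 2 → Fin 5 → Fin 2 → Fin 5) (r₁ r₂ : Fin 5) :
    Set (Finset (Fin 5)) :=
  { S | ∃ (ρ₀ ρ₁ : Fin 5) (c₀ c₁ : Fin 2),
      ρ₀ ∈ ({r₁, r₂} : Finset (Fin 5)) ∧ ρ₁ ∈ ({r₁, r₂} : Finset (Fin 5)) ∧
      ρ₀ ≠ ρ₁ ∧ c₀ ≠ c₁ ∧ P 0 ρ₀ c₀ ≠ P 1 ρ₁ c₁ ∧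
      S = {P 0 ρ₀ c₀, P 1 ρ₁ c₁} }

/-!
A transversal `{P 0 ρ c, P 1 ρ' c'}` of the 2-cube on `{t, t'}` can only fail to exist if
`P 0 t 0 = P 1 t' 1` and `P 0 t' 0 = P 1 t 1`. In an adjacent 2-cube on `{t, s}` these
coincidences, together with injectivity of the columns, make `{P 0 t 0, P 1 s 1}` and
`{P 0 s 0, P 1 t 1}` two transversals with different ranges: the second contains
`P 1 t 1 = P 0 t' 0`, which is neither `P 0 t 0` nor `P 1 s 1`.
-/

open Function

lemma exists_common_of_pair_ne_of_inter_ne_empty {α : Type*} [DecidableEq α] {a b c d : α}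
    (hab : a ≠ b) (hcd : c ≠ d) (hne : ({a, b} : Finset α) ≠ {c, d})
    (hinter : ({a, b} : Finset α) ∩ {c, d} ≠ ∅) :
    ∃ t s t', ({a, b} : Finset α) = {t, s} ∧ ({c, d} : Finset α) = {t, t'} ∧
      t ≠ s ∧ t ≠ t' ∧ s ≠ t' := by
  obtain ⟨x, hx⟩ := Finset.nonempty_iff_ne_empty.mpr hinter
  simp only [Finset.mem_inter, Finset.mem_insert, Finset.mem_singleton] at hx
  rcases hx with ⟨rfl | rfl, rfl | rfl⟩
  · exact ⟨x, b, d, rfl, rfl, hab, hcd, fun h => hne (by rw [h])⟩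
  · exact ⟨x, b, c, rfl, Finset.pair_comm _ _, hab, hcd.symm,
      fun h => hne (by rw [h, Finset.pair_comm])⟩
  · exact ⟨x, a, d, Finset.pair_comm _ _, rfl, hab.symm, hcd,
      fun h => hne (by rw [h, Finset.pair_comm])⟩
  · exact ⟨x, a, c, Finset.pair_comm _ _, Finset.pair_comm _ _, hab.symm, hcd.symm,
      fun h => hne (by rw [h])⟩

section Ranges2

variable {P : Fin 2 → Fin 5 → Fin 2 → Fin 5}

lemma ranges2_congr {a b c d : Fin 5} (h : ({a, b} : Finset (Fin 5)) = {c, d}) :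
    ranges2 P a b = ranges2 P c d := by
  simp only [ranges2, h]

lemma ranges2_comm (a b : Fin 5) : ranges2 P a b = ranges2 P b a :=
  ranges2_congr (Finset.pair_comm a b)

lemma pair_mem_ranges2 {a b : Fin 5} (hab : a ≠ b) (h : P 0 a 0 ≠ P 1 b 1) :
    ({P 0 a 0, P 1 b 1} : Finset (Fin 5)) ∈ ranges2 P a b :=
  ⟨a, b, 0, 1, by simp, by simp, hab, by decide, h, rfl⟩

lemma eq_of_ranges2_eq_empty {a b : Fin 5} (hab : a ≠ b) (h : ranges2 P a b = ∅) :
    P 0 a 0 = P 1 b 1 := by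
  by_contra hne
  simpa [h] using pair_mem_ranges2 hab hne

lemma two_le_ncard_ranges2_of_ranges2_eq_empty (h₀ : Injective fun r => P 0 r 0)
    (h₁ : Injective fun r => P 1 r 1) {t t' s : Fin 5} (htt' : t ≠ t') (hts : t ≠ s)
    (hst' : s ≠ t') (hnt : ranges2 P t t' = ∅) :
    2 ≤ (ranges2 P t s).ncard := by
  have e : P 0 t 0 = P 1 t' 1 := eq_of_ranges2_eq_empty htt' hnt
  have e' : P 0 t' 0 = P 1 t 1 :=
    eq_of_ranges2_eq_empty htt'.symm (by rwa [ranges2_comm])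
  have mem : ({P 0 t 0, P 1 s 1} : Finset (Fin 5)) ∈ ranges2 P t s :=
    pair_mem_ranges2 hts (e ▸ h₁.ne hst'.symm)
  have mem' : ({P 0 s 0, P 1 t 1} : Finset (Fin 5)) ∈ ranges2 P t s := by
    rw [ranges2_comm]
    exact pair_mem_ranges2 hts.symm (e' ▸ h₀.ne hst')
  have hnot : P 1 t 1 ∉ ({P 0 t 0, P 1 s 1} : Finset (Fin 5)) := by
    simp only [Finset.mem_insert, Finset.mem_singleton, not_or]
    exact ⟨e' ▸ h₀.ne htt'.symm, h₁.ne hts⟩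
  refine (Set.one_lt_ncard_iff (Set.toFinite _)).mpr ⟨_, _, mem, mem', ?_⟩
  intro heq
  exact hnot (heq ▸ by simp)

end Ranges2

theorem adjacent_two_cube_ranges_of_no_transversal_general
    (P : Fin 2 → Fin 5 → Fin 2 → Fin 5)
    (hcol : ∀ (l : Fin 2) (c : Fin 2), Function.Bijective fun r => P l r c)
    (r₁ r₂ : Fin 5) (hr : r₁ ≠ r₂)
    (hnt : ranges2 P r₁ r₂ = ∅) :
    ∀ r₃ r₄ : Fin 5, r₃ ≠ r₄ →
      ({r₃, r₄} : Finset (Fin 5)) ≠ {r₁, r₂} →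
      ({r₃, r₄} : Finset (Fin 5)) ∩ {r₁, r₂} ≠ ∅ →
      2 ≤ (ranges2 P r₃ r₄).ncard := by
  intro r₃ r₄ h34 hne hinter
  obtain ⟨t, s, t', h34_eq, h12_eq, hts, htt', hst'⟩ :=
    exists_common_of_pair_ne_of_inter_ne_empty h34 hr hne hinter
  rw [ranges2_congr h12_eq] at hnt
  rw [ranges2_congr h34_eq]
  exact two_le_ncard_ranges2_of_ranges2_eq_empty (hcol 0 0).1 (hcol 1 1).1 htt' hts hst' hnt

/-- If a 2-cube of a `2×5×2` layer-latin parallelepiped has no transversal, then every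
adjacent 2-cube has transversals of at least 2 different ranges. -/
theorem adjacent_two_cube_ranges_of_no_transversal
    (P : Fin 2 → Fin 5 → Fin 2 → Fin 5)
    (hcol : ∀ (l : Fin 2) (c : Fin 2), Function.Bijective fun r => P l r c)
    (hrow : ∀ (l : Fin 2) (r : Fin 5), P l r 0 ≠ P l r 1)
    (hlayers : ∀ (r : Fin 5) (c : Fin 2), P 0 r c ≠ P 1 r c)
    (r₁ r₂ : Fin 5) (hr : r₁ ≠ r₂)
    (hnt : ranges2 P r₁ r₂ = ∅) :
    ∀ r₃ r₄ : Fin 5, r₃ ≠ r₄ →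
      ({r₃, r₄} : Finset (Fin 5)) ≠ {r₁, r₂} →
      ({r₃, r₄} : Finset (Fin 5)) ∩ {r₁, r₂} ≠ ∅ →
      2 ≤ (ranges2 P r₃ r₄).ncard :=
  adjacent_two_cube_ranges_of_no_transversal_general P hcol r₁ r₂ hr hnt
end

section
/- Let A₀ and A₁ be the latin squares of order 5 given (as row-by-row matrices on Fin 5) by A₀ = [[0,1,2,3,4],[1,0,3,4,2],[2,3,4,0,1],[3,4,1,2,0],[4,2,0,1,3]] and A₁ = [[1,0,4,2,3],[0,2,1,3,4],[3,4,0,1,2],[4,3,2,0,1],[2,1,3,4,0]]. Then A₀ and A₁ form a 2-layer latin cuboid of order 5 (in particular A₀ r c ≠ A₁ r c for all r, c), and this cuboid is nonextendible: there is no latin square B of order 5 such that B r c ≠ A₀ r c and B r c ≠ A₁ r c for all rows r and columns c. -/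
/-- The first layer of Kochol's nonextendible `2×5×5` latin cuboid of order 5. -/
def kocholA₀ : Fin 5 → Fin 5 → Fin 5 :=
  ![![0, 1, 2, 3, 4], ![1, 0, 3, 4, 2], ![2, 3, 4, 0, 1],
    ![3, 4, 1, 2, 0], ![4, 2, 0, 1, 3]]

/-- The second layer of Kochol's nonextendible `2×5×5` latin cuboid of order 5. -/
def kocholA₁ : Fin 5 → Fin 5 → Fin 5 :=
  ![![1, 0, 4, 2, 3], ![0, 2, 1, 3, 4], ![3, 4, 0, 1, 2],
    ![4, 3, 2, 0, 1], ![2, 1, 3, 4, 0]]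

def kocholRows : Fin 5 → Fin 13 → Fin 5 → Fin 5 :=
  ![![![2, 3, 0, 4, 1],
      ![2, 3, 1, 4, 0],
      ![2, 4, 3, 0, 1],
      ![2, 4, 3, 1, 0],
      ![3, 2, 0, 4, 1],
      ![3, 2, 1, 4, 0],
      ![3, 4, 0, 1, 2],
      ![3, 4, 1, 0, 2],
      ![4, 2, 3, 0, 1],
      ![4, 2, 3, 1, 0],
      ![4, 3, 0, 1, 2],
      ![4, 3, 1, 0, 2],
      ![4, 3, 1, 0, 2]],
    ![![2, 1, 4, 0, 3],
      ![2, 3, 4, 0, 1],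
      ![2, 3, 4, 1, 0],
      ![2, 4, 0, 1, 3],
      ![3, 1, 4, 2, 0],
      ![3, 4, 0, 2, 1],
      ![3, 4, 2, 0, 1],
      ![3, 4, 2, 1, 0],
      ![4, 1, 0, 2, 3],
      ![4, 1, 2, 0, 3],
      ![4, 3, 0, 2, 1],
      ![4, 3, 2, 0, 1],
      ![4, 3, 2, 1, 0]],
    ![![0, 1, 2, 3, 4],
      ![0, 1, 2, 4, 3],
      ![0, 1, 3, 2, 4],
      ![0, 2, 1, 3, 4],
      ![0, 2, 1, 4, 3],
      ![1, 0, 2, 3, 4],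
      ![1, 0, 2, 4, 3],
      ![1, 0, 3, 2, 4],
      ![1, 2, 3, 4, 0],
      ![4, 0, 1, 2, 3],
      ![4, 1, 2, 3, 0],
      ![4, 1, 3, 2, 0],
      ![4, 2, 1, 3, 0]],
    ![![0, 1, 3, 4, 2],
      ![0, 1, 4, 3, 2],
      ![0, 2, 3, 1, 4],
      ![0, 2, 4, 1, 3],
      ![1, 0, 3, 4, 2],
      ![1, 0, 4, 3, 2],
      ![1, 2, 0, 3, 4],
      ![1, 2, 0, 4, 3],
      ![2, 0, 3, 1, 4],
      ![2, 0, 4, 1, 3],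
      ![2, 1, 0, 3, 4],
      ![2, 1, 0, 4, 3],
      ![2, 1, 0, 4, 3]],
    ![![0, 3, 1, 2, 4],
      ![0, 3, 4, 2, 1],
      ![0, 4, 1, 3, 2],
      ![0, 4, 2, 3, 1],
      ![1, 0, 2, 3, 4],
      ![1, 0, 4, 3, 2],
      ![1, 3, 2, 0, 4],
      ![1, 3, 4, 0, 2],
      ![3, 0, 1, 2, 4],
      ![3, 0, 4, 2, 1],
      ![3, 4, 1, 0, 2],
      ![3, 4, 2, 0, 1],
      ![3, 4, 2, 0, 1]]]


set_option synthInstance.maxSize 100000 in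
lemma kochol_complete : ∀ r x0 x1 x2 x3 x4 : Fin 5,
    x0 ≠ x1 → x0 ≠ x2 → x0 ≠ x3 → x0 ≠ x4 → x1 ≠ x2 → x1 ≠ x3 → x1 ≠ x4 →
    x2 ≠ x3 → x2 ≠ x4 → x3 ≠ x4 →
    (∀ c, ![x0, x1, x2, x3, x4] c ≠ kocholA₀ r c ∧ ![x0, x1, x2, x3, x4] c ≠ kocholA₁ r c) →
    ∃ i : Fin 13, ∀ c, ![x0, x1, x2, x3, x4] c = kocholRows r i c := by decide

lemma kochol_exclude : ∀ i0 i1 : Fin 13,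
    (∀ c, kocholRows 0 i0 c ≠ kocholRows 1 i1 c) → ∀ i2 : Fin 13,
    (∀ c, kocholRows 0 i0 c ≠ kocholRows 2 i2 c) →
    (∀ c, kocholRows 1 i1 c ≠ kocholRows 2 i2 c) → ∀ i3 : Fin 13,
    (∀ c, kocholRows 0 i0 c ≠ kocholRows 3 i3 c) →
    (∀ c, kocholRows 1 i1 c ≠ kocholRows 3 i3 c) →
    (∀ c, kocholRows 2 i2 c ≠ kocholRows 3 i3 c) → ∀ i4 : Fin 13,
    (∀ c, kocholRows 0 i0 c ≠ kocholRows 4 i4 c) →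
    (∀ c, kocholRows 1 i1 c ≠ kocholRows 4 i4 c) →
    (∀ c, kocholRows 2 i2 c ≠ kocholRows 4 i4 c) →
    (∀ c, kocholRows 3 i3 c ≠ kocholRows 4 i4 c) → False := by decide

/-- The two given latin squares form a 2-layer latin cuboid of order 5 which is
nonextendible: no latin square of order 5 differs from both of them in every cell. -/
theorem kochol_cuboid_nonextendible :
    (∀ c : Fin 5, Function.Bijective fun r => kocholA₀ r c) ∧
    (∀ r : Fin 5, Function.Bijective fun c => kocholA₀ r c) ∧
    (∀ c : Fin 5, Function.Bijective fun r => kocholA₁ r c) ∧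
    (∀ r : Fin 5, Function.Bijective fun c => kocholA₁ r c) ∧
    (∀ r c : Fin 5, kocholA₀ r c ≠ kocholA₁ r c) ∧
    ¬ ∃ B : Fin 5 → Fin 5 → Fin 5,
        (∀ c : Fin 5, Function.Bijective fun r => B r c) ∧
        (∀ r : Fin 5, Function.Bijective fun c => B r c) ∧
        (∀ r c : Fin 5, B r c ≠ kocholA₀ r c ∧ B r c ≠ kocholA₁ r c) := by
  refine ⟨by decide, by decide, by decide, by decide, by decide, ?_⟩
  rintro ⟨B, hcol, hrow, hne⟩
  have hBr : ∀ r, ∀ c, B r c = ![B r 0, B r 1, B r 2, B r 3, B r 4] c := by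
    intro r c; fin_cases c <;> rfl
  have hd : ∀ r, ∀ c c' : Fin 5, c ≠ c' → B r c ≠ B r c' := by
    intro r c c' hcc h
    exact hcc ((hrow r).injective h)
  have hmem : ∀ r, ∃ i : Fin 13, ∀ c, B r c = kocholRows r i c := by
    intro r
    obtain ⟨i, hi⟩ := kochol_complete r (B r 0) (B r 1) (B r 2) (B r 3) (B r 4)
      (hd r 0 1 (by decide)) (hd r 0 2 (by decide)) (hd r 0 3 (by decide))
      (hd r 0 4 (by decide)) (hd r 1 2 (by decide)) (hd r 1 3 (by decide))
      (hd r 1 4 (by decide)) (hd r 2 3 (by decide)) (hd r 2 4 (by decide))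
      (hd r 3 4 (by decide)) (fun c => (hBr r c) ▸ hne r c)
    exact ⟨i, fun c => (hBr r c).trans (hi c)⟩
  obtain ⟨i0, h0⟩ := hmem 0
  obtain ⟨i1, h1⟩ := hmem 1
  obtain ⟨i2, h2⟩ := hmem 2
  obtain ⟨i3, h3⟩ := hmem 3
  obtain ⟨i4, h4⟩ := hmem 4
  have hcompat : ∀ r r' : Fin 5, r ≠ r' → ∀ c, B r c ≠ B r' c := by
    intro r r' hrr c h
    exact hrr ((hcol c).injective h)
  exact kochol_exclude i0 i1
    (fun c => h0 c ▸ h1 c ▸ hcompat 0 1 (by decide) c) i2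
    (fun c => h0 c ▸ h2 c ▸ hcompat 0 2 (by decide) c)
    (fun c => h1 c ▸ h2 c ▸ hcompat 1 2 (by decide) c) i3
    (fun c => h0 c ▸ h3 c ▸ hcompat 0 3 (by decide) c)
    (fun c => h1 c ▸ h3 c ▸ hcompat 1 3 (by decide) c)
    (fun c => h2 c ▸ h3 c ▸ hcompat 2 3 (by decide) c) i4
    (fun c => h0 c ▸ h4 c ▸ hcompat 0 4 (by decide) c)
    (fun c => h1 c ▸ h4 c ▸ hcompat 1 4 (by decide) c)
    (fun c => h2 c ▸ h4 c ▸ hcompat 2 4 (by decide) c)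
    (fun c => h3 c ▸ h4 c ▸ hcompat 3 4 (by decide) c)
end
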